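/- arXiv:2012.15718 — 3 statements merged into one kernel-verified Lean document; each statement's English description precedes it below -/
import Mathlib

section
/- In a linear higher category (where each set of n-cells is a vector space and composition is linear), for any two k-composable n-cells a and b (i.e., t_k(a) = s_k(b)), the composite satisfies a ⋆_k b = a - t_k(a) + b, where t_k(a) is regarded as an n-cell via the identity/inclusion map. -/
/-- In a linear higher category, for k-composable n-cells `a` and `b`
(`t_k a = s_k b`), the composite satisfies `a ⋆_k b = a - t_k a + b`,
where `t_k a` is viewed as an n-cell via the identity map `i_k`. -/
theorem stmt_0 {K : Type*} [Field K] {A Ak : Type*}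
    [AddCommGroup A] [Module K A] [AddCommGroup Ak] [Module K Ak]
    (sk tk : A →ₗ[K] Ak) (ik : Ak →ₗ[K] A)
    (hsi : ∀ c, sk (ik c) = c) (hti : ∀ c, tk (ik c) = c)
    (comp : A → A → A)
    (hadd : ∀ a b a' b', tk a = sk b → tk a' = sk b' →
      comp (a + a') (b + b') = comp a b + comp a' b')
    (hsmul : ∀ (c : K) (a b : A), tk a = sk b → comp (c • a) (c • b) = c • comp a b)
    (hunitR : ∀ a : A, comp a (ik (tk a)) = a)
    (hunitL : ∀ b : A, comp (ik (sk b)) b = b)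
    (a b : A) (hab : tk a = sk b) :
    comp a b = a - ik (tk a) + b := by
  have hsk0 : sk (b - ik (tk a)) = 0 := by
    simp [map_sub, hsi, hab]
  have key : comp (a + 0) (ik (tk a) + (b - ik (tk a)))
      = comp a (ik (tk a)) + comp 0 (b - ik (tk a)) := by
    apply hadd
    · rw [hsi]
    · simp [hsk0]
  have h0 : comp 0 (b - ik (tk a)) = b - ik (tk a) := by
    have := hunitL (b - ik (tk a))
    rwa [hsk0, map_zero] at this
  rw [add_zero, add_sub_cancel] at key
  rw [key, hunitR, h0]
  abel
end

section
/- Termination proof for a concrete rewriting system: let X be the system on binary tree monomials over generators x, y, z with the single rule x(y,z) → x(x,x) + y(y,y) + z(z,z) (rewriting the tree with root x and children y,z into the sum of the three homogeneous trees). Define Φ(u) = |u|_x + 3·|u|_{y−z}, where |u|_x counts occurrences of x and |u|_{y−z} counts internal vertices whose left child is y and right child is z. Then Φ strictly decreases along every rewriting step applied in any context, hence the system terminates. -/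
/-- Labels of the internal vertices. -/
inductive Lbl : Type
  | x | y | z
  deriving DecidableEq

/-- Planar binary tree monomials with internal vertices labeled by x, y, z. -/
inductive BT : Type
  | leaf : BT
  | node : Lbl → BT → BT → BT
  deriving DecidableEq

/-- Number of occurrences of the label x. -/
def countX : BT → ℕ
  | .leaf => 0
  | .node a l r => (if a = Lbl.x then 1 else 0) + countX l + countX r

/-- Label of the root vertex, if any. -/
def rootLbl : BT → Option Lbl
  | .leaf => none
  | .node a _ _ => some a

/-- Number of internal vertices whose two children are, from left to right,
labeled y and z. -/
def countYZ : BT → ℕ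
  | .leaf => 0
  | .node _ l r =>
      (if rootLbl l = some Lbl.y ∧ rootLbl r = some Lbl.z then 1 else 0) +
      countYZ l + countYZ r

/-- The termination measure Φ(u) = |u|_x + 3·|u|_{y−z}. -/
def Phi (u : BT) : ℕ := countX u + 3 * countYZ u

/-- One-step tree rewriting, in any context, for the rule
x(y,z) → x(x,x) + y(y,y) + z(z,z): an occurrence of a vertex labeled x whose
two children are vertices labeled y and z is relabeled by (x,x,x), (y,y,y)
or (z,z,z) (one step for each monomial in the support of the target). -/
inductive TStep : BT → BT → Prop
  | ruleX (t1 t2 t3 t4 : BT) :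
      TStep (.node .x (.node .y t1 t2) (.node .z t3 t4))
            (.node .x (.node .x t1 t2) (.node .x t3 t4))
  | ruleY (t1 t2 t3 t4 : BT) :
      TStep (.node .x (.node .y t1 t2) (.node .z t3 t4))
            (.node .y (.node .y t1 t2) (.node .y t3 t4))
  | ruleZ (t1 t2 t3 t4 : BT) :
      TStep (.node .x (.node .y t1 t2) (.node .z t3 t4))
            (.node .z (.node .z t1 t2) (.node .z t3 t4))
  | congL (a : Lbl) (l l' r : BT) : TStep l l' → TStep (.node a l r) (.node a l' r)
  | congR (a : Lbl) (l r r' : BT) : TStep r r' → TStep (.node a l r) (.node a l r')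


lemma tstep_key : ∀ u v : BT, TStep u v →
    (Phi v + 4 ≤ Phi u) ∨ (Phi v < Phi u ∧ rootLbl v = rootLbl u) := by
  intro u v h
  induction h with
  | ruleX t1 t2 t3 t4 =>
      right; refine ⟨?_, rfl⟩; simp [Phi, countX, countYZ, rootLbl]; split_ifs <;> omega
  | ruleY t1 t2 t3 t4 =>
      left; simp [Phi, countX, countYZ, rootLbl]; split_ifs <;> omega
  | ruleZ t1 t2 t3 t4 =>
      left; simp [Phi, countX, countYZ, rootLbl]; split_ifs <;> omega
  | congL a l l' r h ih =>
    right
    refine ⟨?_, rfl⟩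
    rcases ih with h4 | ⟨hlt, hr⟩
    · simp only [Phi, countX, countYZ] at *
      split_ifs <;> omega
    · simp only [Phi, countX, countYZ, hr] at *
      omega
  | congR a l r r' h ih =>
    right
    refine ⟨?_, rfl⟩
    rcases ih with h4 | ⟨hlt, hr⟩
    · simp only [Phi, countX, countYZ] at *
      split_ifs <;> omega
    · simp only [Phi, countX, countYZ, hr] at *
      omega

/-- Φ strictly decreases along every rewriting step applied in any context,
hence the rewriting system terminates. -/
theorem stmt_13 :
    (∀ u v : BT, TStep u v → Phi v < Phi u) ∧
    WellFounded (fun v u : BT => TStep u v) := by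
  have dec : ∀ u v : BT, TStep u v → Phi v < Phi u := by
    intro u v h
    rcases tstep_key u v h with h4 | ⟨hlt, _⟩ <;> omega
  exact ⟨dec, Subrelation.wf (fun {v u} h => dec u v h) (measure Phi).wf⟩
end

section
/- In a linear ω-category (internal ω-category in vector spaces) with a unital section ι and a contraction σ (a homotopy from the identity to ι∘π with σ_a an identity whenever a is in the image of ι or σ), for every n-cell a with n ≥ 1 one has s_n(σ_a) = a − t_{n−1}(a) + σ_{t_{n−1}(a)} and t_n(σ_a) = σ_{s_{n−1}(a)}. -/
/-! Linear ω-categories (internal ω-categories in vector spaces), presented by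
a reflexive globular family `A : ℕ → Type` of vector spaces with linear source,
target and identity maps, the compositions being given by the linear formula
`a ⋆_k b = a − t_k(a) + b` (lower cells viewed via iterated identities). -/

section

variable (K : Type*) [Field K] (A : ℕ → Type*)
  [∀ n, AddCommGroup (A n)] [∀ n, Module K (A n)]

/-- Iterated identity map `A j → A (j+k)`. -/
def embStep (idm : ∀ n, A n →ₗ[K] A (n + 1)) : ∀ j k : ℕ, A j →ₗ[K] A (j + k)
  | _, 0 => LinearMap.id
  | j, k + 1 => (idm (j + k)).comp (embStep idm j k)

/-- A `j`-cell viewed as an `n`-cell (`j ≤ n`) via iterated identities. -/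
def embTo (idm : ∀ n, A n →ₗ[K] A (n + 1)) {j n : ℕ} (h : j ≤ n) (x : A j) : A n :=
  cast (congrArg A (Nat.add_sub_cancel' h)) (embStep K A idm j (n - j) x)

/-- Iterated target map `A (j+k) → A j`. -/
def tgtStep (t : ∀ n, A (n + 1) →ₗ[K] A n) : ∀ j k : ℕ, A (j + k) →ₗ[K] A j
  | _, 0 => LinearMap.id
  | j, k + 1 => (tgtStep t j k).comp (t (j + k))

/-- The `j`-target of an `n`-cell (`j ≤ n`). -/
def tgtTo (t : ∀ n, A (n + 1) →ₗ[K] A n) {n j : ℕ} (h : j ≤ n) (x : A n) : A j :=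
  tgtStep K A t j (n - j) (cast (congrArg A (Nat.add_sub_cancel' h).symm) x)

/-- Iterated source map `A (j+k) → A j`. -/
def srcStep (s : ∀ n, A (n + 1) →ₗ[K] A n) : ∀ j k : ℕ, A (j + k) →ₗ[K] A j
  | _, 0 => LinearMap.id
  | j, k + 1 => (srcStep s j k).comp (s (j + k))

/-- The `j`-source of an `n`-cell (`j ≤ n`). -/
def srcTo (s : ∀ n, A (n + 1) →ₗ[K] A n) {n j : ℕ} (h : j ≤ n) (x : A n) : A j :=
  srcStep K A s j (n - j) (cast (congrArg A (Nat.add_sub_cancel' h).symm) x)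

/-- The composition `x ⋆_j y = x − t_j(x) + y` of `n`-cells at level `j ≤ n`. -/
def compAt (idm : ∀ n, A n →ₗ[K] A (n + 1)) (t : ∀ n, A (n + 1) →ₗ[K] A n)
    {n : ℕ} (j : ℕ) (h : j ≤ n) (x y : A n) : A n :=
  x - embTo K A idm h (tgtTo K A t h x) + y


/-- The iterated composite appearing as the source of a homotopy cell:
`hChainSrc … a n = a ⋆_0 σ_{t_0(a)} ⋆_1 ⋯ ⋆_{n−1} σ_{t_{n−1}(a)}`
(here `F = id`). -/
def hChainSrc (t : ∀ n, A (n + 1) →ₗ[K] A n) (idm : ∀ n, A n →ₗ[K] A (n + 1))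
    (σ : ∀ n, A n →ₗ[K] A (n + 1)) {n : ℕ} (a : A n) : ℕ → A n
  | 0 => a
  | k + 1 =>
    if h : k < n then
      compAt K A idm t k (le_of_lt h) (hChainSrc t idm σ a k)
        (embTo K A idm h (σ k (tgtTo K A t (le_of_lt h) a)))
    else hChainSrc t idm σ a k

/-- The iterated composite appearing as the target of a homotopy cell:
`hChainTgt … a n = σ_{s_{n−1}(a)} ⋆_{n−1} ⋯ ⋆_1 σ_{s_0(a)} ⋆_0 G(a)`,
where `G = ι∘π` collapses a positive-dimensional cell to the identity of the
chosen representative `g(s_0(a))` of its 0-source. -/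
def hChainTgt (s : ∀ n, A (n + 1) →ₗ[K] A n) (t : ∀ n, A (n + 1) →ₗ[K] A n)
    (idm : ∀ n, A n →ₗ[K] A (n + 1)) (σ : ∀ n, A n →ₗ[K] A (n + 1))
    (g : A 0 →ₗ[K] A 0) {n : ℕ} (a : A n) : ℕ → A n
  | 0 => embTo K A idm (Nat.zero_le n) (g (srcTo K A s (Nat.zero_le n) a))
  | k + 1 =>
    if h : k < n then
      compAt K A idm t k (le_of_lt h)
        (embTo K A idm h (σ k (srcTo K A s (le_of_lt h) a)))
        (hChainTgt s t idm σ g a k)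
    else hChainTgt s t idm σ g a k

end

section AuxLemmas

variable {K : Type*} [Field K] {A : ℕ → Type*}
  [∀ n, AddCommGroup (A n)] [∀ n, Module K (A n)]
variable (s t : ∀ n, A (n + 1) →ₗ[K] A n) (idm : ∀ n, A n →ₗ[K] A (n + 1))
  (σ : ∀ n, A n →ₗ[K] A (n + 1)) (g : A 0 →ₗ[K] A 0)

lemma castA_add {m n : ℕ} (e : m = n) (x y : A m) :
    cast (congrArg A e) (x + y) = cast (congrArg A e) x + cast (congrArg A e) y := by
  subst e; rfl

lemma castA_sub {m n : ℕ} (e : m = n) (x y : A m) :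
    cast (congrArg A e) (x - y) = cast (congrArg A e) x - cast (congrArg A e) y := by
  subst e; rfl

lemma embTo_self {n : ℕ} (h : n ≤ n) (x : A n) : embTo K A idm h x = x := by
  unfold embTo
  have key : ∀ k (e : n + k = n) (x : A n),
      cast (congrArg A e) (embStep K A idm n k x) = x := by
    intro k e x
    have hk : k = 0 := by omega
    subst hk; rfl
  exact key _ (Nat.add_sub_cancel' h) x

lemma embTo_succ {j n : ℕ} (h' : j ≤ n) (h : j ≤ n + 1) (x : A j) :
    embTo K A idm h x = idm n (embTo K A idm h' x) := by
  unfold embTo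
  have key : ∀ k k' (e : j + k = n + 1) (e' : j + k' = n) (x : A j),
      cast (congrArg A e) (embStep K A idm j k x)
        = idm n (cast (congrArg A e') (embStep K A idm j k' x)) := by
    intro k k' e e' x
    subst e'
    have hk : k = k' + 1 := by omega
    subst hk
    rfl
  exact key _ _ (Nat.add_sub_cancel' h) (Nat.add_sub_cancel' h') x

lemma tgtTo_self {n : ℕ} (h : n ≤ n) (x : A n) : tgtTo K A t h x = x := by
  unfold tgtTo
  have key : ∀ k (e : n + k = n) (x : A n),
      tgtStep K A t n k (cast (congrArg A e.symm) x) = x := by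
    intro k e x
    have hk : k = 0 := by omega
    subst hk; rfl
  exact key _ (Nat.add_sub_cancel' h) x

lemma tgtTo_succ {j n : ℕ} (h' : j ≤ n) (h : j ≤ n + 1) (x : A (n + 1)) :
    tgtTo K A t h x = tgtTo K A t h' (t n x) := by
  unfold tgtTo
  have key : ∀ k k' (e : j + k = n + 1) (e' : j + k' = n) (x : A (n + 1)),
      tgtStep K A t j k (cast (congrArg A e.symm) x)
        = tgtStep K A t j k' (cast (congrArg A e'.symm) (t n x)) := by
    intro k k' e e' x
    subst e'
    have hk : k = k' + 1 := by omega
    subst hk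
    rfl
  exact key _ _ (Nat.add_sub_cancel' h) (Nat.add_sub_cancel' h') x

lemma srcTo_self {n : ℕ} (h : n ≤ n) (x : A n) : srcTo K A s h x = x := by
  unfold srcTo
  have key : ∀ k (e : n + k = n) (x : A n),
      srcStep K A s n k (cast (congrArg A e.symm) x) = x := by
    intro k e x
    have hk : k = 0 := by omega
    subst hk; rfl
  exact key _ (Nat.add_sub_cancel' h) x

lemma srcTo_succ {j n : ℕ} (h' : j ≤ n) (h : j ≤ n + 1) (x : A (n + 1)) :
    srcTo K A s h x = srcTo K A s h' (s n x) := by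
  unfold srcTo
  have key : ∀ k k' (e : j + k = n + 1) (e' : j + k' = n) (x : A (n + 1)),
      srcStep K A s j k (cast (congrArg A e.symm) x)
        = srcStep K A s j k' (cast (congrArg A e'.symm) (s n x)) := by
    intro k k' e e' x
    subst e'
    have hk : k = k' + 1 := by omega
    subst hk
    rfl
  exact key _ _ (Nat.add_sub_cancel' h) (Nat.add_sub_cancel' h') x

lemma embTo_add {j n : ℕ} (h : j ≤ n) (x y : A j) :
    embTo K A idm h (x + y) = embTo K A idm h x + embTo K A idm h y := by
  unfold embTo; rw [map_add]; exact castA_add (Nat.add_sub_cancel' h) _ _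

lemma embTo_sub {j n : ℕ} (h : j ≤ n) (x y : A j) :
    embTo K A idm h (x - y) = embTo K A idm h x - embTo K A idm h y := by
  unfold embTo; rw [map_sub]; exact castA_sub (Nat.add_sub_cancel' h) _ _

lemma tgtTo_add {j n : ℕ} (h : j ≤ n) (x y : A n) :
    tgtTo K A t h (x + y) = tgtTo K A t h x + tgtTo K A t h y := by
  unfold tgtTo; rw [castA_add (Nat.add_sub_cancel' h).symm, map_add]

lemma tgtTo_sub {j n : ℕ} (h : j ≤ n) (x y : A n) :
    tgtTo K A t h (x - y) = tgtTo K A t h x - tgtTo K A t h y := by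
  unfold tgtTo; rw [castA_sub (Nat.add_sub_cancel' h).symm, map_sub]

lemma embTo_embTo {j k : ℕ} (hjk : j ≤ k) :
    ∀ {n : ℕ} (hkn : k ≤ n) (hjn : j ≤ n) (x : A j),
      embTo K A idm hkn (embTo K A idm hjk x) = embTo K A idm hjn x := by
  intro n hkn
  induction n, hkn using Nat.le_induction with
  | base => intro hjn x; rw [embTo_self]
  | succ n hkn ih =>
    intro hjn x
    rw [embTo_succ idm hkn, embTo_succ idm (le_trans hjk hkn), ih]

lemma tgtTo_embTo_ge (hti : ∀ n (x : A n), t n (idm n x) = x) {j k : ℕ} (hjk : j ≤ k) :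
    ∀ {n : ℕ} (hkn : k ≤ n) (hjn : j ≤ n) (x : A j),
      tgtTo K A t hkn (embTo K A idm hjn x) = embTo K A idm hjk x := by
  intro n hkn
  induction n, hkn using Nat.le_induction with
  | base => intro hjn x; rw [tgtTo_self]
  | succ n hkn ih =>
    intro hjn x
    rw [embTo_succ idm (le_trans hjk hkn), tgtTo_succ t hkn, hti, ih]

lemma tgtTo_embTo_le (hti : ∀ n (x : A n), t n (idm n x) = x) {k j : ℕ} (hkj : k ≤ j) :
    ∀ {n : ℕ} (hjn : j ≤ n) (hkn : k ≤ n) (x : A j),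
      tgtTo K A t hkn (embTo K A idm hjn x) = tgtTo K A t hkj x := by
  intro n hjn
  induction n, hjn using Nat.le_induction with
  | base => intro hkn x; rw [embTo_self]
  | succ n hjn ih =>
    intro hkn x
    rw [embTo_succ idm hjn, tgtTo_succ t (le_trans hkj hjn), hti, ih]

lemma srcTo_srcTo {k j : ℕ} (hkj : k ≤ j) :
    ∀ {n : ℕ} (hjn : j ≤ n) (hkn : k ≤ n) (a : A n),
      srcTo K A s hkj (srcTo K A s hjn a) = srcTo K A s hkn a := by
  intro n hjn
  induction n, hjn using Nat.le_induction with
  | base => intro hkn a; rw [srcTo_self]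
  | succ n hjn ih =>
    intro hkn a
    rw [srcTo_succ s hjn, ih (le_trans hkj hjn), srcTo_succ s (le_trans hkj hjn) hkn]

lemma embTo_one {m : ℕ} (h : m ≤ m + 1) (x : A m) :
    embTo K A idm h x = idm m x := by
  rw [embTo_succ idm (le_refl m), embTo_self]

lemma tgtTo_one {m : ℕ} (h : m ≤ m + 1) (x : A (m + 1)) :
    tgtTo K A t h x = t m x := by
  rw [tgtTo_succ t (le_refl m), tgtTo_self]

lemma srcTo_one {m : ℕ} (h : m ≤ m + 1) (x : A (m + 1)) :
    srcTo K A s h x = s m x := by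
  rw [srcTo_succ s (le_refl m), srcTo_self]

lemma s_srcTo {k n : ℕ} (h : k + 1 ≤ n) (a : A n) :
    s k (srcTo K A s h a) = srcTo K A s (Nat.le_of_succ_le h) a := by
  rw [← srcTo_one s (Nat.le_succ k), srcTo_srcTo s (Nat.le_succ k) h (Nat.le_of_succ_le h)]

lemma hChainSrc_zero {n : ℕ} (a : A n) : hChainSrc K A t idm σ a 0 = a := rfl

lemma hChainSrc_succ {n : ℕ} (a : A n) (k : ℕ) (h : k < n) :
    hChainSrc K A t idm σ a (k + 1)
      = compAt K A idm t k (le_of_lt h) (hChainSrc K A t idm σ a k)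
          (embTo K A idm h (σ k (tgtTo K A t (le_of_lt h) a))) := by
  rw [hChainSrc, dif_pos h]

lemma hChainTgt_zero {n : ℕ} (a : A n) :
    hChainTgt K A s t idm σ g a 0
      = embTo K A idm (Nat.zero_le n) (g (srcTo K A s (Nat.zero_le n) a)) := rfl

lemma hChainTgt_succ {n : ℕ} (a : A n) (k : ℕ) (h : k < n) :
    hChainTgt K A s t idm σ g a (k + 1)
      = compAt K A idm t k (le_of_lt h)
          (embTo K A idm h (σ k (srcTo K A s (le_of_lt h) a)))
          (hChainTgt K A s t idm σ g a k) := by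
  rw [hChainTgt, dif_pos h]

lemma chainSrc_eval (hti : ∀ n (x : A n), t n (idm n x) = x) :
    ∀ {n : ℕ} (a : A n) (k : ℕ) (hk : k + 1 ≤ n),
      hChainSrc K A t idm σ a (k + 1)
        = a - embTo K A idm (Nat.le_of_succ_le hk) (tgtTo K A t (Nat.le_of_succ_le hk) a)
            + embTo K A idm hk (σ k (tgtTo K A t (Nat.le_of_succ_le hk) a)) := by
  intro n a k
  induction k with
  | zero =>
    intro hk
    rw [hChainSrc_succ t idm σ a 0 hk, hChainSrc_zero]
    rfl
  | succ k ih =>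
    intro hk
    have hk' : k + 1 ≤ n := Nat.le_of_succ_le hk
    rw [hChainSrc_succ t idm σ a (k + 1) hk, ih hk']
    unfold compAt
    rw [tgtTo_add, tgtTo_sub,
      tgtTo_embTo_ge t idm hti (Nat.le_succ k) hk' (Nat.le_of_succ_le hk'),
      tgtTo_embTo_ge t idm hti (le_refl (k + 1)) hk' hk', embTo_self,
      embTo_add, embTo_sub,
      embTo_embTo idm (Nat.le_succ k) hk' (Nat.le_of_succ_le hk')]
    abel

lemma chainTgt_eval (hti : ∀ n (x : A n), t n (idm n x) = x)
    (hHtgt : ∀ (n : ℕ) (a : A n), t n (σ n a) = hChainTgt K A s t idm σ g a n) :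
    ∀ (k : ℕ) {n : ℕ} (hk : k + 1 ≤ n) (a : A n),
      hChainTgt K A s t idm σ g a (k + 1)
        = embTo K A idm hk (σ k (srcTo K A s (Nat.le_of_succ_le hk) a)) := by
  intro k
  induction k with
  | zero =>
    intro n hk a
    rw [hChainTgt_succ s t idm σ g a 0 hk]
    unfold compAt
    rw [tgtTo_embTo_le t idm hti (Nat.zero_le 1) hk (Nat.zero_le n),
      tgtTo_one, hHtgt 0, hChainTgt_zero, embTo_self, srcTo_self, hChainTgt_zero]
    rw [show srcTo K A s (Nat.zero_le n) a = srcTo K A s (Nat.le_of_succ_le hk) a from rfl]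
    abel
  | succ k ih =>
    intro n hk a
    have hk' : k + 1 ≤ n := Nat.le_of_succ_le hk
    rw [hChainTgt_succ s t idm σ g a (k + 1) hk, ih hk' a]
    unfold compAt
    rw [tgtTo_embTo_le t idm hti (Nat.le_succ (k + 1)) hk hk',
      tgtTo_one, hHtgt (k + 1), ih (le_refl (k + 1)) _, embTo_self,
      srcTo_one, s_srcTo s hk' a]
    abel

end AuxLemmas

/-- In a linear ω-category with a unital section `ι` (with `g = ι∘π` on
0-cells) and a contraction `σ` — a homotopy from the identity to `ι∘π` which
is the identity on cells in the image of `ι` or of `σ` — every `n`-cell `a`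
with `n = m+1 ≥ 1` satisfies
`s_n(σ_a) = a − t_{n−1}(a) + σ_{t_{n−1}(a)}` and `t_n(σ_a) = σ_{s_{n−1}(a)}`. -/
theorem stmt_17 {K : Type*} [Field K] (A : ℕ → Type*)
    [∀ n, AddCommGroup (A n)] [∀ n, Module K (A n)]
    (s t : ∀ n, A (n + 1) →ₗ[K] A n) (idm : ∀ n, A n →ₗ[K] A (n + 1))
    (hsi : ∀ n (x : A n), s n (idm n x) = x)
    (hti : ∀ n (x : A n), t n (idm n x) = x)
    (hss : ∀ n (x : A (n + 2)), s n (s (n + 1) x) = s n (t (n + 1) x))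
    (htt : ∀ n (x : A (n + 2)), t n (t (n + 1) x) = t n (s (n + 1) x))
    -- `g = ι ∘ π` on 0-cells, for a section `ι` of the projection `π`
    (g : A 0 →ₗ[K] A 0) (hgg : ∀ x, g (g x) = g x)
    (σ : ∀ n, A n →ₗ[K] A (n + 1))
    -- homotopy axioms: source and target of the cells `σ_a`
    (hHsrc : ∀ (n : ℕ) (a : A n), s n (σ n a) = hChainSrc K A t idm σ a n)
    (hHtgt : ∀ (n : ℕ) (a : A n), t n (σ n a) = hChainTgt K A s t idm σ g a n)
    -- homotopy axiom: compatibility with identities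
    (hσid : ∀ (n : ℕ) (a : A n), σ (n + 1) (idm n a) = idm (n + 1) (σ n a))
    -- contraction conditions: σ is an identity on images of σ and of ι
    (hσσ : ∀ (n : ℕ) (c : A n), σ (n + 1) (σ n c) = idm (n + 1) (σ n c))
    (hσι : ∀ (n : ℕ) (x : A 0),
      σ n (embTo K A idm (Nat.zero_le n) (g x)) =
        idm n (embTo K A idm (Nat.zero_le n) (g x))) :
    ∀ (m : ℕ) (a : A (m + 1)),
      s (m + 1) (σ (m + 1) a) = a - idm m (t m a) + σ m (t m a) ∧
      t (m + 1) (σ (m + 1) a) = σ m (s m a) := by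
  intro m a
  have hk : m + 1 ≤ m + 1 := le_refl (m + 1)
  constructor
  · rw [hHsrc (m + 1) a, chainSrc_eval t idm σ hti a m hk, embTo_one, tgtTo_one,
      embTo_self]
  · rw [hHtgt (m + 1) a, chainTgt_eval s t idm σ g hti hHtgt m hk a, embTo_self,
      srcTo_one]
end
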